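/- Let K be a field extension of k such that the number of k-algebra homomorphisms from F to K equals dim_k F. Then for every t ∈ F³ and all φ, ψ ∈ (F →ₐ[k] K), one has Π(φ,ψ)(Tr(t)) = Σ_{χ ∈ (F →ₐ[k] K)} Π(φ,χ,ψ)(t). -/

import Mathlib

open TensorProduct

universe u

variable (k F : Type u) [Field k] [CommRing F] [Algebra k F]

/-- `ε₀ : F ⊗ F → F ⊗ F ⊗ F`, `x ⊗ y ↦ 1 ⊗ x ⊗ y`. -/
noncomputable def eps0 : F ⊗[k] F →ₐ[k] F ⊗[k] (F ⊗[k] F) :=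
  Algebra.TensorProduct.includeRight

/-- `ε₁ : F ⊗ F → F ⊗ F ⊗ F`, `x ⊗ y ↦ x ⊗ 1 ⊗ y`. -/
noncomputable def eps1 : F ⊗[k] F →ₐ[k] F ⊗[k] (F ⊗[k] F) :=
  Algebra.TensorProduct.map (AlgHom.id k F) Algebra.TensorProduct.includeRight

/-- `ε₂ : F ⊗ F → F ⊗ F ⊗ F`, `x ⊗ y ↦ x ⊗ y ⊗ 1`. -/
noncomputable def eps2 : F ⊗[k] F →ₐ[k] F ⊗[k] (F ⊗[k] F) :=
  Algebra.TensorProduct.map (AlgHom.id k F) Algebra.TensorProduct.includeLeft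

/-- `F³` regarded as an `F²`-algebra via `ε₁`. -/
noncomputable instance : Algebra (F ⊗[k] F) (F ⊗[k] (F ⊗[k] F)) :=
  (eps1 k F).toRingHom.toAlgebra

/-- The trace of `F³` as an `F²`-algebra (via `ε₁`). -/
noncomputable def trF3 : F ⊗[k] (F ⊗[k] F) →ₗ[F ⊗[k] F] F ⊗[k] F :=
  Algebra.trace (F ⊗[k] F) (F ⊗[k] (F ⊗[k] F))

/-- The Brauer-factor-set multiplication `⋆_c` on `F²` attached to `c ∈ F³`,
`x ⋆_c y = Tr(ε₂(x)·c·ε₀(y))`. The `k`-vector space `F²` with this multiplication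
is the algebra `A(F,c)`. -/
noncomputable def starMul (c : F ⊗[k] (F ⊗[k] F)) (x y : F ⊗[k] F) : F ⊗[k] F :=
  trF3 k F (eps2 k F x * c * eps0 k F y)

/-!
Moving the middle factor to the end identifies `F³`, as an `F²`-algebra via `ε₁`, with the
base change `F² ⊗ F`; hence `Tr (x ⊗ y ⊗ z) = Tr_{F/k}(y) • (x ⊗ z)`. When there are exactly
`dim_k F` homomorphisms `χ : F → K`, the square matrix `(χ (b i))` of a basis `b` is invertible
by Dedekind's independence of characters, and it conjugates multiplication by `y` to the
diagonal matrix `(χ y)_χ`. So `Tr_{F/k}(y) = ∑ χ, χ y` in `K`, and the theorem follows.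
-/

open Algebra.TensorProduct (productMap productMap_apply_tmul)

theorem Algebra.TensorProduct.trace_tmul {R A B : Type*} [CommRing R] [CommRing A] [CommRing B]
    [Algebra R A] [Algebra R B] [Module.Free R B] [Module.Finite R B] (a : A) (b : B) :
    Algebra.trace A (A ⊗[R] B) (a ⊗ₜ b) = a * algebraMap R A (Algebra.trace R B b) := by
  have : a ⊗ₜ[R] b = a • (1 ⊗ₜ b : A ⊗[R] B) := by rw [smul_tmul', smul_eq_mul, mul_one]
  rw [this, map_smul, Algebra.trace_apply, ← Algebra.baseChange_lmul,
    LinearMap.trace_baseChange, smul_eq_mul, Algebra.trace_apply]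

theorem algebraMap_trace_eq_sum_algHom {k F K : Type*} [CommRing k] [Nontrivial k] [CommRing F]
    [Algebra k F] [Module.Free k F] [Module.Finite k F] [Field K] [Algebra k K]
    [Fintype (F →ₐ[k] K)]
    (hcard : Fintype.card (F →ₐ[k] K) = Module.finrank k F) (y : F) :
    algebraMap k K (Algebra.trace k F y) = ∑ χ : F →ₐ[k] K, χ y := by
  classical
  let b : Module.Basis (F →ₐ[k] K) k F :=
    (Module.finBasisOfFinrankEq k F hcard.symm).reindex (Fintype.equivFin _).symm
  let M : Matrix (F →ₐ[k] K) (F →ₐ[k] K) K := Matrix.of fun χ i => χ (b i)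
  have hM : IsUnit M := Matrix.linearIndependent_rows_iff_isUnit.mp <|
    (linearIndependent_algHom_toLinearMap k F K).map' _ (b.constr K).symm.ker
  have hconj : M * (Algebra.leftMulMatrix b y).map (algebraMap k K) =
      Matrix.diagonal (fun χ => χ y) * M := by
    ext χ j
    calc _ = χ (∑ i, b.repr (y * b j) i • b i) := by
          simp [M, Matrix.mul_apply, Algebra.leftMulMatrix_apply, LinearMap.toMatrix_apply,
            Algebra.smul_def, mul_comm]
      _ = _ := by simp [b.sum_repr, M, Matrix.diagonal_mul]
  have := hM.invertible
  rw [Algebra.trace_eq_matrix_trace b, AddMonoidHom.map_trace,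
    ← Matrix.inv_mul_cancel_left_of_invertible (A := M) (Matrix.map _ _), hconj,
    Matrix.trace_mul_comm, Matrix.mul_inv_cancel_right_of_invertible, Matrix.trace_diagonal]

theorem algHom_trace_tensorProduct_eq_sum_productMap {k F K A : Type*} [CommRing k]
    [Nontrivial k] [CommRing F] [Algebra k F] [Module.Free k F] [Module.Finite k F] [Field K]
    [Algebra k K] [Fintype (F →ₐ[k] K)] [CommRing A] [Algebra k A]
    (hcard : Fintype.card (F →ₐ[k] K) = Module.finrank k F) (f : A →ₐ[k] K)
    (u : A ⊗[k] F) :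
    f (Algebra.trace A (A ⊗[k] F) u) = ∑ χ : F →ₐ[k] K, productMap f χ u := by
  induction u using TensorProduct.induction_on with
  | zero => simp
  | tmul a y =>
    simp only [Algebra.TensorProduct.trace_tmul, map_mul, AlgHom.commutes,
      algebraMap_trace_eq_sum_algHom hcard, Finset.mul_sum, productMap_apply_tmul]
  | add u v hu hv => simp only [map_add, hu, hv, Finset.sum_add_distrib]

noncomputable def tensorMiddleAlgEquiv : F ⊗[k] (F ⊗[k] F) ≃ₐ[k] (F ⊗[k] F) ⊗[k] F :=
  (Algebra.TensorProduct.congr AlgEquiv.refl (Algebra.TensorProduct.comm k F F)).trans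
    (Algebra.TensorProduct.assoc k k k F F F).symm

@[simp]
theorem tensorMiddleAlgEquiv_tmul (x y z : F) :
    tensorMiddleAlgEquiv k F (x ⊗ₜ[k] (y ⊗ₜ[k] z)) = (x ⊗ₜ[k] z) ⊗ₜ[k] y := by
  simp [tensorMiddleAlgEquiv]

theorem tensorMiddleAlgEquiv_eps1 (a : F ⊗[k] F) :
    tensorMiddleAlgEquiv k F (eps1 k F a) = a ⊗ₜ[k] (1 : F) := by
  refine AlgHom.congr_fun (φ₁ := (tensorMiddleAlgEquiv k F).toAlgHom.comp (eps1 k F))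
    (φ₂ := Algebra.TensorProduct.includeLeft) ?_ a
  ext <;> simp [eps1]

noncomputable def tensorMiddleEquiv : F ⊗[k] (F ⊗[k] F) ≃ₐ[F ⊗[k] F] (F ⊗[k] F) ⊗[k] F :=
  AlgEquiv.ofRingEquiv (f := (tensorMiddleAlgEquiv k F).toRingEquiv)
    (tensorMiddleAlgEquiv_eps1 k F)

theorem productMap_comp_tensorMiddleAlgEquiv {K : Type*} [Field K] [Algebra k K]
    (φ χ ψ : F →ₐ[k] K) :
    (productMap (productMap φ ψ) χ).comp (tensorMiddleAlgEquiv k F).toAlgHom =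
      productMap φ (productMap χ ψ) := by
  ext <;> simp [Algebra.TensorProduct.one_def]

theorem productMap_trF3 [FiniteDimensional k F]
    (K : Type u) [Field K] [Algebra k K] [Fintype (F →ₐ[k] K)]
    (hcard : Fintype.card (F →ₐ[k] K) = Module.finrank k F)
    (t : F ⊗[k] (F ⊗[k] F)) (φ ψ : F →ₐ[k] K) :
    Algebra.TensorProduct.productMap φ ψ (trF3 k F t) =
      ∑ χ : F →ₐ[k] K,
        Algebra.TensorProduct.productMap φ (Algebra.TensorProduct.productMap χ ψ) t := by
  calc productMap φ ψ (trF3 k F t)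
      = productMap φ ψ
          (Algebra.trace (F ⊗[k] F) ((F ⊗[k] F) ⊗[k] F) (tensorMiddleEquiv k F t)) := by
        rw [trF3, Algebra.trace_eq_of_algEquiv]
    _ = ∑ χ : F →ₐ[k] K, productMap (productMap φ ψ) χ (tensorMiddleEquiv k F t) :=
        algHom_trace_tensorProduct_eq_sum_productMap hcard _ _
    _ = _ := Finset.sum_congr rfl fun χ _ =>
        AlgHom.congr_fun (productMap_comp_tensorMiddleAlgEquiv k F φ χ ψ) t
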